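/- Let Ω ⊆ ℝ^d be convex, g : Ω → ℝ twice differentiable with ρI ⪯ ∇²g ⪯ LI on Ω for 0 < ρ ≤ L, attaining its minimum at θ*_g ∈ Ω with B(θ*_g, r) ⊆ Ω. Let f : Ω → ℝ be differentiable with D₁ = sup_{θ∈Ω} ‖∇f(θ) - ∇g(θ)‖₂ ≤ ρr. Then f attains its infimum at some θ*_f ∈ Ω with ‖θ*_f - θ*_g‖₂ ≤ 2D₁/ρ, and f and g are (log 2, 3LD₁²/ρ²)-close. -/

import Mathlib

/-- `f` and `g` are `(ε,δ)`-close on the set `Ω`. -/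
def IsCloseOn {α : Type*} (f g : α → ℝ) (Ω : Set α) (ε δ : ℝ) : Prop :=
  ∀ θ ∈ Ω, g θ - sInf (g '' Ω) ≤ Real.exp ε * ((f θ - sInf (f '' Ω)) + δ) ∧
    f θ - sInf (f '' Ω) ≤ Real.exp ε * ((g θ - sInf (g '' Ω)) + δ)

/-!
The lower Hessian bound gives the first-order strong convexity inequality
`g y ≥ g x + Dg(x)(y - x) + ρ/2 ‖y - x‖²` on `Ω`, and the gradient bound makes `f - g`
`D₁`-Lipschitz there. A minimiser `θf` of `f` on the compact ball `B(θg, r)` minimises `f` on all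
of `Ω`: moving a point outside the ball radially onto the sphere lowers `g` by at least `ρ r` per
unit of distance, more than the `D₁ ≤ ρ r` that `f - g` can change. Comparing `f θf ≤ f θg` with the
quadratic growth `g θ ≥ g θg + ρ/2 ‖θ - θg‖²` gives `‖θf - θg‖ ≤ 2 D₁ / ρ`, and the same two facts
with `D₁ s ≤ ρ s² / 4 + D₁² / ρ` give the closeness.
-/

open Set Metric

theorem IsMinOn.csInf_image_eq {α β : Type*} [ConditionallyCompleteLinearOrder β] {f : α → β}
    {s : Set α} {a : α} (h : IsMinOn f s a) (ha : a ∈ s) : sInf (f '' s) = f a :=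
  IsLeast.csInf_eq ⟨mem_image_of_mem f ha, forall_mem_image.2 h⟩

theorem IsCloseOn.mono {α : Type*} {f g : α → ℝ} {Ω : Set α} {ε δ δ' : ℝ}
    (h : IsCloseOn f g Ω ε δ) (hδ : δ ≤ δ') : IsCloseOn f g Ω ε δ' := fun θ hθ =>
  ⟨(h θ hθ).1.trans (by gcongr), (h θ hθ).2.trans (by gcongr)⟩

theorem add_deriv_add_half_le_of_le_deriv2 {φ φ' φ'' : ℝ → ℝ} {m : ℝ}
    (hφ : ∀ t, HasDerivAt φ (φ' t) t) (hφ' : ∀ t, HasDerivAt φ' (φ'' t) t)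
    (hm : ∀ t ∈ Icc (0 : ℝ) 1, m ≤ φ'' t) :
    φ 0 + φ' 0 + m / 2 ≤ φ 1 := by
  set χ' : ℝ → ℝ := fun t => φ' t - φ' 0 - m * t
  set χ : ℝ → ℝ := fun t => φ t - φ' 0 * t - m / 2 * t ^ 2
  have hχ' : ∀ t, HasDerivAt χ' (φ'' t - m) t := fun t =>
    (((hφ' t).sub_const (φ' 0)).sub ((hasDerivAt_id' t).const_mul m)).congr_deriv (by ring)
  have hχ : ∀ t, HasDerivAt χ (χ' t) t := fun t =>
    (((hφ t).sub ((hasDerivAt_id' t).const_mul (φ' 0))).sub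
      ((hasDerivAt_pow 2 t).const_mul (m / 2))).congr_deriv (by simp only [χ']; ring)
  have hχ'_mono : MonotoneOn χ' (Icc 0 1) :=
    monotoneOn_of_hasDerivWithinAt_nonneg (convex_Icc 0 1)
      (fun t _ => (hχ' t).continuousAt.continuousWithinAt)
      (fun t _ => (hχ' t).hasDerivWithinAt)
      (fun t ht => sub_nonneg.2 (hm t (interior_subset ht)))
  have hχ_mono : MonotoneOn χ (Icc 0 1) :=
    monotoneOn_of_hasDerivWithinAt_nonneg (convex_Icc 0 1)
      (fun t _ => (hχ t).continuousAt.continuousWithinAt)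
      (fun t _ => (hχ t).hasDerivWithinAt)
      (fun t ht => by
        simpa [χ'] using hχ'_mono (left_mem_Icc.2 zero_le_one) (interior_subset ht)
          (interior_subset ht).1)
  have := hχ_mono (left_mem_Icc.2 zero_le_one) (right_mem_Icc.2 zero_le_one) zero_le_one
  simp only [χ] at this
  linarith

section NormedSpace

variable {E : Type*} [NormedAddCommGroup E] [NormedSpace ℝ E]

theorem Convex.add_fderiv_add_half_mul_sq_le {Ω : Set E} (hΩ : Convex ℝ Ω) {g : E → ℝ}
    (hg : ContDiff ℝ 2 g) {ρ : ℝ}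
    (hess : ∀ θ ∈ Ω, ∀ v : E, ρ * ‖v‖ ^ 2 ≤ iteratedFDeriv ℝ 2 g θ ![v, v]) :
    ∀ x ∈ Ω, ∀ y ∈ Ω, g x + fderiv ℝ g x (y - x) + ρ / 2 * ‖y - x‖ ^ 2 ≤ g y := by
  intro x hx y hy
  set v := y - x
  have hg1 : Differentiable ℝ g := hg.differentiable (by norm_num)
  have hg2 : Differentiable ℝ (fderiv ℝ g) :=
    (hg.fderiv_right (m := 1) (by norm_num)).differentiable (by norm_num)
  have hline : ∀ t : ℝ, HasDerivAt (fun s : ℝ => x + s • v) v t := fun t => by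
    simpa using ((hasDerivAt_id t).smul_const v).const_add x
  have hφ' : ∀ t : ℝ, HasDerivAt (fun s => fderiv ℝ g (x + s • v) v)
      (fderiv ℝ (fderiv ℝ g) (x + t • v) v v) t := fun t =>
    ((hg2 _).hasFDerivAt.comp_hasDerivAt t (hline t)).clm_apply (hasDerivAt_const t v)
      |>.congr_deriv (by simp)
  have hm : ∀ t ∈ Icc (0 : ℝ) 1, ρ * ‖v‖ ^ 2 ≤ fderiv ℝ (fderiv ℝ g) (x + t • v) v v := by
    intro t ht
    have hmem : x + t • v ∈ Ω := by
      simpa [v, add_sub_cancel] using hΩ.add_smul_sub_mem hx hy ht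
    simpa [iteratedFDeriv_two_apply] using hess _ hmem v
  have := add_deriv_add_half_le_of_le_deriv2
    (fun t => (hg1 _).hasFDerivAt.comp_hasDerivAt t (hline t)) hφ' hm
  simp only [Function.comp_apply, zero_smul, add_zero, one_smul, v, add_sub_cancel] at this
  linarith


theorem Convex.add_mul_mul_sq_le_of_fderiv_eq_zero {Ω : Set E} (hΩ : Convex ℝ Ω) {g : E → ℝ}
    {ρ : ℝ} (hρ : 0 ≤ ρ)
    (hsc : ∀ x ∈ Ω, ∀ y ∈ Ω, g x + fderiv ℝ g x (y - x) + ρ / 2 * ‖y - x‖ ^ 2 ≤ g y)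
    {θg θ : E} (hθg : θg ∈ Ω) (hgrad : fderiv ℝ g θg = 0) (hθ : θ ∈ Ω)
    {t : ℝ} (ht₀ : 0 < t) (ht₁ : t ≤ 1) :
    g (θg + t • (θ - θg)) + ρ * t * (1 - t) * ‖θ - θg‖ ^ 2 ≤ g θ := by
  set θ' := θg + t • (θ - θg)
  set s := ‖θ - θg‖
  set A := fderiv ℝ g θ' (θ - θg)
  have hθ' : θ' ∈ Ω := hΩ.add_smul_sub_mem hθg hθ ⟨ht₀.le, ht₁⟩
  -- adding the two first-order bounds between `θg` and `θ'` gives `t A ≥ ρ t² s²`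
  have hA : ρ * t * s ^ 2 ≤ A := by
    have h₁ := hsc θg hθg θ' hθ'
    have h₂ := hsc θ' hθ' θg hθg
    have hθ'θg : θ' - θg = t • (θ - θg) := add_sub_cancel_left _ _
    rw [hgrad, zero_apply, hθ'θg, norm_smul, Real.norm_of_nonneg ht₀.le]
      at h₁
    rw [← neg_sub, hθ'θg, map_neg, map_smul, norm_neg, norm_smul,
      Real.norm_of_nonneg ht₀.le, smul_eq_mul] at h₂
    nlinarith
  have h₃ := hsc θ' hθ' θ hθ
  have hθθ' : θ - θ' = (1 - t) • (θ - θg) := by simp only [θ']; module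
  rw [hθθ', map_smul, smul_eq_mul, norm_smul, Real.norm_of_nonneg (sub_nonneg.2 ht₁)] at h₃
  nlinarith [mul_le_mul_of_nonneg_left hA (sub_nonneg.2 ht₁), sq_nonneg ((1 - t) * s)]

theorem isMinOn_of_isMinOn_closedBall {Ω : Set E} (hΩ : Convex ℝ Ω) {f g : E → ℝ}
    {ρ D r : ℝ} (hρ : 0 ≤ ρ) (hr : 0 < r) (hDr : D ≤ ρ * r)
    (hsc : ∀ x ∈ Ω, ∀ y ∈ Ω, g x + fderiv ℝ g x (y - x) + ρ / 2 * ‖y - x‖ ^ 2 ≤ g y)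
    (hlip : ∀ x ∈ Ω, ∀ y ∈ Ω, |(f x - g x) - (f y - g y)| ≤ D * ‖x - y‖)
    {θg θf : E} (hθg : θg ∈ Ω) (hgrad : fderiv ℝ g θg = 0)
    (hmin : IsMinOn f (closedBall θg r) θf) :
    IsMinOn f Ω θf := by
  intro θ hθ
  set s := ‖θ - θg‖
  rcases le_or_gt s r with hs | hs
  · exact hmin (mem_closedBall_iff_norm.2 hs)
  have hs₀ : 0 < s := hr.trans hs
  set θ' := θg + (r / s) • (θ - θg)
  have hθ' : θ' ∈ Ω := hΩ.add_smul_sub_mem hθg hθ ⟨by positivity, (div_le_one hs₀).2 hs.le⟩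
  have hθ'_ball : θ' ∈ closedBall θg r := by
    rw [mem_closedBall_iff_norm, add_sub_cancel_left, norm_smul, Real.norm_of_nonneg (by positivity),
      div_mul_cancel₀ _ hs₀.ne']
  have hθθ' : ‖θ - θ'‖ = s - r := by
    have : θ - θ' = (1 - r / s) • (θ - θg) := by simp only [θ']; module
    rw [this, norm_smul, Real.norm_of_nonneg (sub_nonneg.2 ((div_le_one hs₀).2 hs.le)), sub_mul,
      one_mul, div_mul_cancel₀ _ hs₀.ne']
  have hgrowth := hΩ.add_mul_mul_sq_le_of_fderiv_eq_zero hρ hsc hθg hgrad hθ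
    (div_pos hr hs₀) ((div_le_one hs₀).2 hs.le)
  have hgrowth' : ρ * (r / s) * (1 - r / s) * s ^ 2 = ρ * r * (s - r) := by field_simp
  have hlipθ := (abs_le.1 (hlip θ hθ θ' hθ')).1
  rw [hθθ'] at hlipθ
  have : f θ' ≤ f θ := by
    nlinarith [mul_le_mul_of_nonneg_right hDr (sub_nonneg.2 hs.le)]
  exact (hmin hθ'_ball).trans this

end NormedSpace

section QuadraticGrowth

variable {E : Type*} [SeminormedAddCommGroup E] {Ω : Set E} {f g : E → ℝ} {ρ D : ℝ} {θg θf : E}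

theorem norm_sub_le_of_isMinOn_of_quadratic_growth (hρ : 0 < ρ) (hD : 0 ≤ D)
    (hgrowth : ∀ θ ∈ Ω, g θg + ρ / 2 * ‖θ - θg‖ ^ 2 ≤ g θ)
    (hlip : ∀ x ∈ Ω, ∀ y ∈ Ω, |(f x - g x) - (f y - g y)| ≤ D * ‖x - y‖)
    (hθg : θg ∈ Ω) (hθf : θf ∈ Ω) (hmin : IsMinOn f Ω θf) :
    ‖θf - θg‖ ≤ 2 * D / ρ := by
  have h₁ := hgrowth θf hθf
  have h₂ := (abs_le.1 (hlip θf hθf θg hθg)).1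
  have h₃ : f θf ≤ f θg := hmin hθg
  rw [le_div_iff₀ hρ]
  nlinarith [norm_nonneg (θf - θg)]

theorem isCloseOn_log_two_of_quadratic_growth (hρ : 0 < ρ) (hD : 0 ≤ D)
    (hgrowth : ∀ θ ∈ Ω, g θg + ρ / 2 * ‖θ - θg‖ ^ 2 ≤ g θ)
    (hlip : ∀ x ∈ Ω, ∀ y ∈ Ω, |(f x - g x) - (f y - g y)| ≤ D * ‖x - y‖)
    (hθg : θg ∈ Ω) (hθf : θf ∈ Ω) (hmin : IsMinOn f Ω θf) :
    IsCloseOn f g Ω (Real.log 2) (3 * D ^ 2 / ρ) := by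
  have hming : IsMinOn g Ω θg := fun θ hθ =>
    le_trans (le_add_of_nonneg_right (by positivity)) (hgrowth θ hθ)
  have hdist := norm_sub_le_of_isMinOn_of_quadratic_growth hρ hD hgrowth hlip hθg hθf hmin
  have hDθf : D * ‖θg - θf‖ ≤ 2 * (D ^ 2 / ρ) := by
    calc D * ‖θg - θf‖ ≤ D * (2 * D / ρ) := by
          rw [norm_sub_rev]; exact mul_le_mul_of_nonneg_left hdist hD
      _ = 2 * (D ^ 2 / ρ) := by ring
  intro θ hθ
  rw [hmin.csInf_image_eq hθf, hming.csInf_image_eq hθg, Real.exp_log two_pos, mul_div_assoc]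
  have hgθ := hgrowth θ hθ
  have hAMGM : D * ‖θ - θg‖ ≤ (g θ - g θg) / 2 + D ^ 2 / ρ := by
    have : D * ‖θ - θg‖ ≤ ρ / 4 * ‖θ - θg‖ ^ 2 + D ^ 2 / ρ := by
      rw [← sub_nonneg]
      have : ρ / 4 * ‖θ - θg‖ ^ 2 + D ^ 2 / ρ - D * ‖θ - θg‖ = (ρ * ‖θ - θg‖ - 2 * D) ^ 2 / (4 * ρ) := by
        field_simp; ring
      rw [this]; positivity
    linarith
  obtain ⟨hθ₁, hθ₁'⟩ := abs_le.1 (hlip θ hθ θg hθg)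
  have hθ₂ := (abs_le.1 (hlip θg hθg θf hθf)).2
  have hfθg : f θf ≤ f θg := hmin hθg
  have hgθf : g θg ≤ g θf := hming hθf
  have hgθ' : g θg ≤ g θ := hming hθ
  have : 0 ≤ D ^ 2 / ρ := by positivity
  constructor <;> linarith

end QuadraticGrowth

theorem Convex.abs_sub_sub_le_of_norm_gradient_sub_le {F : Type*} [NormedAddCommGroup F]
    [InnerProductSpace ℝ F] [CompleteSpace F] {Ω : Set F} (hΩ : Convex ℝ Ω) {f g : F → ℝ}
    (hf : ∀ θ ∈ Ω, DifferentiableAt ℝ f θ) (hg : ∀ θ ∈ Ω, DifferentiableAt ℝ g θ) {D : ℝ}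
    (hD : ∀ θ ∈ Ω, ‖gradient f θ - gradient g θ‖ ≤ D) :
    ∀ x ∈ Ω, ∀ y ∈ Ω, |(f x - g x) - (f y - g y)| ≤ D * ‖x - y‖ := by
  intro x hx y hy
  have hD' : ∀ θ ∈ Ω, ‖fderiv ℝ f θ - fderiv ℝ g θ‖ ≤ D := fun θ hθ => by
    simpa only [gradient, ← map_sub, LinearIsometryEquiv.norm_map] using hD θ hθ
  simpa only [Real.norm_eq_abs] using hΩ.norm_image_sub_le_of_norm_hasFDerivWithin_le
    (f := fun z => f z - g z)
    (fun z hz => ((hf z hz).hasFDerivAt.sub (hg z hz).hasFDerivAt).hasFDerivWithinAt) hD' hy hx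

theorem isCloseOn_of_small_gradient_perturbation {d : ℕ}
    (Ω : Set (EuclideanSpace ℝ (Fin d))) (hΩ : Convex ℝ Ω)
    (g : EuclideanSpace ℝ (Fin d) → ℝ) (hg : ContDiff ℝ 2 g)
    (ρ L : ℝ) (hρ : 0 < ρ) (hρL : ρ ≤ L)
    (hessg : ∀ θ ∈ Ω, ∀ v : EuclideanSpace ℝ (Fin d),
      ρ * ‖v‖ ^ 2 ≤ iteratedFDeriv ℝ 2 g θ ![v, v] ∧
        iteratedFDeriv ℝ 2 g θ ![v, v] ≤ L * ‖v‖ ^ 2)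
    (θg : EuclideanSpace ℝ (Fin d)) (hθg : θg ∈ Ω) (hming : IsMinOn g Ω θg)
    (r : ℝ) (hr : 0 < r) (hball : Metric.closedBall θg r ⊆ Ω)
    (f : EuclideanSpace ℝ (Fin d) → ℝ)
    (hf : ∀ θ ∈ Ω, DifferentiableAt ℝ f θ) (D₁ : ℝ)
    (hD : ∀ θ ∈ Ω, ‖gradient f θ - gradient g θ‖ ≤ D₁) (hD₁ : D₁ ≤ ρ * r) :
    ∃ θf ∈ Ω, IsMinOn f Ω θf ∧ ‖θf - θg‖ ≤ 2 * D₁ / ρ ∧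
      IsCloseOn f g Ω (Real.log 2) (3 * L * D₁ ^ 2 / ρ ^ 2) := by
  have hD₀ : 0 ≤ D₁ := (norm_nonneg _).trans (hD θg hθg)
  have hgrad : fderiv ℝ g θg = 0 :=
    (hming.isLocalMin (Filter.mem_of_superset (closedBall_mem_nhds θg hr) hball)).fderiv_eq_zero
  have hsc := hΩ.add_fderiv_add_half_mul_sq_le hg fun θ hθ v => (hessg θ hθ v).1
  have hgrowth : ∀ θ ∈ Ω, g θg + ρ / 2 * ‖θ - θg‖ ^ 2 ≤ g θ := fun θ hθ => by
    simpa [hgrad] using hsc θg hθg θ hθ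
  have hlip := hΩ.abs_sub_sub_le_of_norm_gradient_sub_le hf
    (fun θ _ => (hg.differentiable (by norm_num)).differentiableAt) hD
  obtain ⟨θf, hθf_ball, hθf_min⟩ := (isCompact_closedBall θg r).exists_isMinOn
    ⟨θg, mem_closedBall_self hr.le⟩ fun θ hθ => (hf θ (hball hθ)).continuousAt.continuousWithinAt
  have hmin := isMinOn_of_isMinOn_closedBall hΩ hρ.le hr hD₁ hsc hlip hθg hgrad hθf_min
  have hθf := hball hθf_ball
  refine ⟨θf, hθf, hmin,
    norm_sub_le_of_isMinOn_of_quadratic_growth hρ hD₀ hgrowth hlip hθg hθf hmin,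
    (isCloseOn_log_two_of_quadratic_growth hρ hD₀ hgrowth hlip hθg hθf hmin).mono ?_⟩
  calc 3 * D₁ ^ 2 / ρ = 3 * ρ * D₁ ^ 2 / ρ ^ 2 := by field_simp
    _ ≤ 3 * L * D₁ ^ 2 / ρ ^ 2 := by gcongr
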